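/- Consider n i.i.d. copies (X_i, Y_{0,i}, Y_{1,i}, …, Y_{K,i})_{i=1}^n of a finite-alphabet source whose joint pmf satisfies the Markov chains Y_S — (X,Y_0) — Y_{S^c} for all S ⊆ {1,…,K}. Let J_k := φ_k(Y_k^n) for arbitrary functions φ_k, and define U_{k,i} := (J_k, Y_k^{i−1}) and Q_i := (X^{i−1}, X_{i+1}^n, Y_0^{i−1}, Y_{0,i+1}^n). Then for every subset S ⊆ {1,…,K}: I(J_S; Y_S^n | X^n, J_{S^c}, Y_0^n) ≥ Σ_{k∈S} Σ_{i=1}^n I(U_{k,i}; Y_{k,i} | X_i, Y_{0,i}, Q_i). -/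

import Mathlib

open scoped BigOperators
open Classical

noncomputable section

/-- Probability that the random variable `X` equals `a`, under the pmf `p` on the finite
sample space `Ω`. -/
def pr {Ω : Type*} [Fintype Ω] (p : Ω → ℝ) {A : Type*} (X : Ω → A) (a : A) : ℝ :=
  ∑ ω, if X ω = a then p ω else 0

/-- Shannon entropy `H(X) = −Σ_a P(X=a) log P(X=a)` (natural log, with `log 0 = 0`). -/
def ent {Ω : Type*} [Fintype Ω] (p : Ω → ℝ) {A : Type*} [Fintype A] (X : Ω → A) : ℝ :=
  -∑ a, pr p X a * Real.log (pr p X a)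

/-- Conditional entropy `H(X|Y) = H(X,Y) − H(Y)`. -/
def cent {Ω : Type*} [Fintype Ω] (p : Ω → ℝ) {A B : Type*} [Fintype A] [Fintype B]
    (X : Ω → A) (Y : Ω → B) : ℝ :=
  ent p (fun ω => (X ω, Y ω)) - ent p Y

/-- Mutual information `I(X;Y) = H(X) − H(X|Y)`. -/
def mi {Ω : Type*} [Fintype Ω] (p : Ω → ℝ) {A B : Type*} [Fintype A] [Fintype B]
    (X : Ω → A) (Y : Ω → B) : ℝ :=
  ent p X - cent p X Y

/-- Conditional mutual information `I(X;Y|Z) = H(X|Z) − H(X|Y,Z)`. -/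
def cmi {Ω : Type*} [Fintype Ω] (p : Ω → ℝ) {A B C : Type*} [Fintype A] [Fintype B] [Fintype C]
    (X : Ω → A) (Y : Ω → B) (Z : Ω → C) : ℝ :=
  cent p X Z - cent p X (fun ω => (Y ω, Z ω))

namespace S6

variable {Ω : Type*} [Fintype Ω] {p : Ω → ℝ}

lemma pr_nonneg (hp : ∀ ω, 0 ≤ p ω) {A : Type*} (X : Ω → A) (a : A) : 0 ≤ pr p X a :=
  Finset.sum_nonneg fun ω _ => by by_cases h : X ω = a <;> simp [pr, h, hp ω]

lemma pr_mono (hp : ∀ ω, 0 ≤ p ω) {A B : Type*} {X : Ω → A} {Z : Ω → B} {a : A} {z : B}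
    (h : ∀ ω, X ω = a → Z ω = z) : pr p X a ≤ pr p Z z := by
  refine Finset.sum_le_sum fun ω _ => ?_
  by_cases hx : X ω = a
  · simp [hx, h ω hx]
  · by_cases hz : Z ω = z <;> simp [hx, hz, hp ω]

lemma le_pr (hp : ∀ ω, 0 ≤ p ω) {A : Type*} (X : Ω → A) (ω : Ω) : p ω ≤ pr p X (X ω) := by
  have := Finset.single_le_sum (f := fun ω' => if X ω' = X ω then p ω' else 0)
    (fun ω' _ => by by_cases h : X ω' = X ω <;> simp [h, hp ω']) (Finset.mem_univ ω)
  simpa [pr] using this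

lemma sum_pr {A : Type*} [Fintype A] (X : Ω → A) : ∑ a, pr p X a = ∑ ω, p ω := by
  unfold pr
  rw [Finset.sum_comm]
  exact Finset.sum_congr rfl fun ω _ => by simp

/-- expectation grouping -/
lemma sum_pr_mul {A : Type*} [Fintype A] (X : Ω → A) (F : A → ℝ) :
    ∑ a, pr p X a * F a = ∑ ω, p ω * F (X ω) := by
  unfold pr
  calc ∑ a : A, (∑ ω : Ω, if X ω = a then p ω else 0) * F a
      = ∑ a : A, ∑ ω : Ω, (if X ω = a then p ω * F a else 0) := by
        refine Finset.sum_congr rfl fun a _ => ?_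
        rw [Finset.sum_mul]
        exact Finset.sum_congr rfl fun ω _ => by by_cases h : X ω = a <;> simp [h]
    _ = ∑ ω : Ω, ∑ a : A, (if X ω = a then p ω * F a else 0) := Finset.sum_comm
    _ = ∑ ω : Ω, p ω * F (X ω) := Finset.sum_congr rfl fun ω _ => by simp


lemma ent_eq_sum {A : Type*} [Fintype A] (X : Ω → A) :
    ent p X = -∑ ω, p ω * Real.log (pr p X (X ω)) := by
  unfold ent
  rw [sum_pr_mul X (fun a => Real.log (pr p X a))]

lemma pr_congr_at {A B : Type*} {X : Ω → A} {Y : Ω → B}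
    (h : ∀ ω₁ ω₂, X ω₁ = X ω₂ ↔ Y ω₁ = Y ω₂) (ω : Ω) :
    pr p X (X ω) = pr p Y (Y ω) := by
  unfold pr
  refine Finset.sum_congr rfl fun ω' _ => ?_
  by_cases hx : X ω' = X ω
  · rw [if_pos hx, if_pos ((h ω' ω).1 hx)]
  · rw [if_neg hx, if_neg (fun hy => hx ((h ω' ω).2 hy))]

lemma ent_congr {A B : Type*} [Fintype A] [Fintype B] {X : Ω → A} {Y : Ω → B}
    (h : ∀ ω₁ ω₂, X ω₁ = X ω₂ ↔ Y ω₁ = Y ω₂) : ent p X = ent p Y := by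
  rw [ent_eq_sum, ent_eq_sum]
  congr 1
  exact Finset.sum_congr rfl fun ω _ => by rw [pr_congr_at h ω]

lemma cent_congr_right {A B B' : Type*} [Fintype A] [Fintype B] [Fintype B']
    {X : Ω → A} {Y : Ω → B} {Y' : Ω → B'}
    (h : ∀ ω₁ ω₂, Y ω₁ = Y ω₂ ↔ Y' ω₁ = Y' ω₂) : cent p X Y = cent p X Y' := by
  unfold cent
  rw [ent_congr h, ent_congr (X := fun ω => (X ω, Y ω)) (Y := fun ω => (X ω, Y' ω))
    (fun ω₁ ω₂ => by rw [Prod.mk.injEq, Prod.mk.injEq, h ω₁ ω₂])]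

lemma cent_congr_left {A A' B : Type*} [Fintype A] [Fintype A'] [Fintype B]
    {X : Ω → A} {X' : Ω → A'} {Y : Ω → B}
    (h : ∀ ω₁ ω₂, X ω₁ = X ω₂ ↔ X' ω₁ = X' ω₂) : cent p X Y = cent p X' Y := by
  unfold cent
  rw [ent_congr (X := fun ω => (X ω, Y ω)) (Y := fun ω => (X' ω, Y ω))
    (fun ω₁ ω₂ => by rw [Prod.mk.injEq, Prod.mk.injEq, h ω₁ ω₂])]

lemma cmi_congr {A A' B B' C C' : Type*} [Fintype A] [Fintype A'] [Fintype B] [Fintype B']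
    [Fintype C] [Fintype C']
    {X : Ω → A} {X' : Ω → A'} {Y : Ω → B} {Y' : Ω → B'} {Z : Ω → C} {Z' : Ω → C'}
    (hX : ∀ ω₁ ω₂, X ω₁ = X ω₂ ↔ X' ω₁ = X' ω₂)
    (hY : ∀ ω₁ ω₂, Y ω₁ = Y ω₂ ↔ Y' ω₁ = Y' ω₂)
    (hZ : ∀ ω₁ ω₂, Z ω₁ = Z ω₂ ↔ Z' ω₁ = Z' ω₂) :
    cmi p X Y Z = cmi p X' Y' Z' := by
  unfold cmi
  rw [cent_congr_left hX, cent_congr_left hX, cent_congr_right hZ,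
    cent_congr_right (X := X') (Y := fun ω => (Y ω, Z ω)) (Y' := fun ω => (Y' ω, Z' ω))
      (fun ω₁ ω₂ => by rw [Prod.mk.injEq, Prod.mk.injEq, hY ω₁ ω₂, hZ ω₁ ω₂])]

/-- `I(X;(Y,Y')|Z) = I(X;Y|Z) + I(X;Y'|(Y,Z))` -/
lemma cmi_chain {A B B' C : Type*} [Fintype A] [Fintype B] [Fintype B'] [Fintype C]
    (X : Ω → A) (Y : Ω → B) (Y' : Ω → B') (Z : Ω → C) :
    cmi p X (fun ω => (Y ω, Y' ω)) Z = cmi p X Y Z + cmi p X Y' (fun ω => (Y ω, Z ω)) := by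
  unfold cmi
  have : cent p X (fun ω => ((Y ω, Y' ω), Z ω)) = cent p X (fun ω => (Y' ω, (Y ω, Z ω))) :=
    cent_congr_right (fun ω₁ ω₂ => by
      constructor <;> (intro h; simp only [Prod.mk.injEq] at h ⊢; tauto))
  rw [this]; ring

lemma cmi_symm {A B C : Type*} [Fintype A] [Fintype B] [Fintype C]
    (X : Ω → A) (Y : Ω → B) (Z : Ω → C) : cmi p X Y Z = cmi p Y X Z := by
  unfold cmi cent
  have h1 : ent p (fun ω => (X ω, (Y ω, Z ω))) = ent p (fun ω => (Y ω, (X ω, Z ω))) :=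
    ent_congr (fun ω₁ ω₂ => by
      constructor <;> (intro h; simp only [Prod.mk.injEq] at h ⊢; tauto))
  rw [h1]; ring

/-- `I(X;Y|Z) = 0` when `Y` is a function of `Z`. -/
lemma cmi_of_determ {A B C : Type*} [Fintype A] [Fintype B] [Fintype C]
    {X : Ω → A} {Y : Ω → B} {Z : Ω → C}
    (h : ∀ ω₁ ω₂, Z ω₁ = Z ω₂ → Y ω₁ = Y ω₂) : cmi p X Y Z = 0 := by
  unfold cmi
  rw [cent_congr_right (X := X) (Y := fun ω => (Y ω, Z ω)) (Y' := Z)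
    (fun ω₁ ω₂ => by
      constructor
      · intro hh; simp only [Prod.mk.injEq] at hh; exact hh.2
      · intro hz; simp only [Prod.mk.injEq]; exact ⟨h ω₁ ω₂ hz, hz⟩)]
  ring


lemma cent_eq_sum {A B : Type*} [Fintype A] [Fintype B] (X : Ω → A) (Y : Ω → B) :
    cent p X Y = -∑ ω, p ω *
      (Real.log (pr p (fun ω' => (X ω', Y ω')) (X ω, Y ω)) - Real.log (pr p Y (Y ω))) := by
  unfold cent
  rw [ent_eq_sum (fun ω => (X ω, Y ω)), ent_eq_sum Y]
  have h : ∑ ω, p ω * (Real.log (pr p (fun ω' => (X ω', Y ω')) (X ω, Y ω))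
      - Real.log (pr p Y (Y ω)))
      = ∑ ω, (p ω * Real.log (pr p (fun ω' => (X ω', Y ω')) (X ω, Y ω))
        - p ω * Real.log (pr p Y (Y ω))) :=
    Finset.sum_congr rfl fun ω _ => by ring
  rw [h, Finset.sum_sub_distrib]
  ring

lemma cmi_eq_sum {A B C : Type*} [Fintype A] [Fintype B] [Fintype C]
    (X : Ω → A) (Y : Ω → B) (Z : Ω → C) :
    cmi p X Y Z = ∑ ω, p ω *
      (Real.log (pr p (fun ω' => (X ω', (Y ω', Z ω'))) (X ω, (Y ω, Z ω)))
       + Real.log (pr p Z (Z ω))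
       - Real.log (pr p (fun ω' => (X ω', Z ω')) (X ω, Z ω))
       - Real.log (pr p (fun ω' => (Y ω', Z ω')) (Y ω, Z ω))) := by
  unfold cmi
  rw [cent_eq_sum X Z, cent_eq_sum X (fun ω => (Y ω, Z ω))]
  rw [← Finset.sum_neg_distrib, ← Finset.sum_neg_distrib, ← Finset.sum_sub_distrib]
  exact Finset.sum_congr rfl fun ω _ => by ring

/-- zero criterion for conditional mutual information -/
lemma cmi_eq_zero (hp : ∀ ω, 0 ≤ p ω) {A B C : Type*} [Fintype A] [Fintype B] [Fintype C]
    {X : Ω → A} {Y : Ω → B} {Z : Ω → C}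
    (hfac : ∀ ω, p ω ≠ 0 →
      pr p (fun ω' => (X ω', (Y ω', Z ω'))) (X ω, (Y ω, Z ω)) * pr p Z (Z ω)
        = pr p (fun ω' => (X ω', Z ω')) (X ω, Z ω)
          * pr p (fun ω' => (Y ω', Z ω')) (Y ω, Z ω)) :
    cmi p X Y Z = 0 := by
  rw [cmi_eq_sum]
  refine Finset.sum_eq_zero fun ω _ => ?_
  by_cases hω : p ω = 0
  · rw [hω, zero_mul]
  · have h0 : 0 < p ω := lt_of_le_of_ne (hp ω) (Ne.symm hω)
    have h1 : 0 < pr p (fun ω' => (X ω', (Y ω', Z ω'))) (X ω, (Y ω, Z ω)) :=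
      lt_of_lt_of_le h0 (le_pr hp _ ω)
    have h2 : 0 < pr p Z (Z ω) := lt_of_lt_of_le h0 (le_pr hp _ ω)
    have h3 : 0 < pr p (fun ω' => (X ω', Z ω')) (X ω, Z ω) :=
      lt_of_lt_of_le h0 (le_pr hp _ ω)
    have h4 : 0 < pr p (fun ω' => (Y ω', Z ω')) (Y ω, Z ω) :=
      lt_of_lt_of_le h0 (le_pr hp _ ω)
    have : Real.log (pr p (fun ω' => (X ω', (Y ω', Z ω'))) (X ω, (Y ω, Z ω)))
        + Real.log (pr p Z (Z ω))
        = Real.log (pr p (fun ω' => (X ω', Z ω')) (X ω, Z ω))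
          + Real.log (pr p (fun ω' => (Y ω', Z ω')) (Y ω, Z ω)) := by
      rw [← Real.log_mul (ne_of_gt h1) (ne_of_gt h2), ← Real.log_mul (ne_of_gt h3) (ne_of_gt h4),
        hfac ω hω]
    rw [sub_eq_zero.mpr, mul_zero]
    linarith

/-- marginalization: `Σ_x P(X=x, Z=z) = P(Z=z)` -/
lemma sum_pr_pair {A B : Type*} [Fintype A] (X : Ω → A) (Z : Ω → B) (z : B) :
    ∑ x, pr p (fun ω => (X ω, Z ω)) (x, z) = pr p Z z := by
  unfold pr
  rw [Finset.sum_comm]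
  refine Finset.sum_congr rfl fun ω _ => ?_
  by_cases hz : Z ω = z
  · rw [Finset.sum_eq_single (X ω)]
    · simp [hz]
    · intro b _ hb; rw [if_neg]; simp [Ne.symm hb]
    · simp
  · rw [if_neg hz, Finset.sum_eq_zero]
    intro x _; rw [if_neg]; simp [hz]

lemma cmi_nonneg (hp : ∀ ω, 0 ≤ p ω) {A B C : Type*} [Fintype A] [Fintype B] [Fintype C]
    (X : Ω → A) (Y : Ω → B) (Z : Ω → C) : 0 ≤ cmi p X Y Z := by
  rw [cmi_eq_sum]
  set W : Ω → A × B × C := fun ω => (X ω, (Y ω, Z ω)) with hW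
  set F : A × B × C → ℝ := fun v =>
      Real.log (pr p (fun ω' => (X ω', Z ω')) (v.1, v.2.2))
      + Real.log (pr p (fun ω' => (Y ω', Z ω')) (v.2.1, v.2.2))
      - Real.log (pr p W v) - Real.log (pr p Z v.2.2) with hF
  have hrw : ∑ ω, p ω *
      (Real.log (pr p W (X ω, (Y ω, Z ω)))
       + Real.log (pr p Z (Z ω))
       - Real.log (pr p (fun ω' => (X ω', Z ω')) (X ω, Z ω))
       - Real.log (pr p (fun ω' => (Y ω', Z ω')) (Y ω, Z ω)))
      = -∑ v, pr p W v * F v := by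
    rw [sum_pr_mul W F, ← Finset.sum_neg_distrib]
    refine Finset.sum_congr rfl fun ω _ => ?_
    simp only [hF, hW]
    ring
  rw [hrw, neg_nonneg]
  -- bound each term by q v - P v
  set q : A × B × C → ℝ := fun v =>
    if pr p Z v.2.2 = 0 then 0 else
      pr p (fun ω' => (X ω', Z ω')) (v.1, v.2.2)
      * pr p (fun ω' => (Y ω', Z ω')) (v.2.1, v.2.2) / pr p Z v.2.2 with hq
  have hqnn : ∀ v, 0 ≤ q v := by
    intro v
    simp only [hq]
    split
    · exact le_refl _
    · exact div_nonneg (mul_nonneg (pr_nonneg hp _ _) (pr_nonneg hp _ _)) (pr_nonneg hp _ _)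
  have hterm : ∀ v, pr p W v * F v ≤ q v - pr p W v := by
    intro v
    by_cases hv : pr p W v = 0
    · rw [hv, zero_mul, sub_zero]; exact hqnn v
    · have h0 : 0 < pr p W v := lt_of_le_of_ne (pr_nonneg hp _ _) (Ne.symm hv)
      have hZle : pr p W v ≤ pr p Z v.2.2 :=
        pr_mono hp (fun ω h => by rw [← h])
      have hXZle : pr p W v ≤ pr p (fun ω' => (X ω', Z ω')) (v.1, v.2.2) :=
        pr_mono hp (fun ω h => by rw [← h])
      have hYZle : pr p W v ≤ pr p (fun ω' => (Y ω', Z ω')) (v.2.1, v.2.2) :=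
        pr_mono hp (fun ω h => by rw [← h])
      have hZ0 : 0 < pr p Z v.2.2 := lt_of_lt_of_le h0 hZle
      have hXZ0 : 0 < pr p (fun ω' => (X ω', Z ω')) (v.1, v.2.2) := lt_of_lt_of_le h0 hXZle
      have hYZ0 : 0 < pr p (fun ω' => (Y ω', Z ω')) (v.2.1, v.2.2) := lt_of_lt_of_le h0 hYZle
      have hq0 : 0 < q v := by
        simp only [hq, if_neg (ne_of_gt hZ0)]
        positivity
      have hFv : F v = Real.log (q v / pr p W v) := by
        simp only [hF, hq, if_neg (ne_of_gt hZ0)]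
        rw [Real.log_div (by positivity) (ne_of_gt h0),
          Real.log_div (by positivity) (ne_of_gt hZ0),
          Real.log_mul (ne_of_gt hXZ0) (ne_of_gt hYZ0)]
        ring
      have hlog : Real.log (q v / pr p W v) ≤ q v / pr p W v - 1 :=
        Real.log_le_sub_one_of_pos (by positivity)
      calc pr p W v * F v ≤ pr p W v * (q v / pr p W v - 1) := by
            rw [hFv]; exact mul_le_mul_of_nonneg_left hlog (le_of_lt h0)
        _ = q v - pr p W v := by field_simp
  calc ∑ v, pr p W v * F v ≤ ∑ v, (q v - pr p W v) := Finset.sum_le_sum fun v _ => hterm v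
    _ = ∑ v, q v - ∑ v, pr p W v := Finset.sum_sub_distrib _ _
    _ ≤ 0 := by
        rw [sub_nonpos]
        have e1 : ∑ v : A × B × C, q v = ∑ z, ∑ x, ∑ y, q (x, (y, z)) := by
          rw [Fintype.sum_prod_type]
          have h0 : ∀ x, ∑ w : B × C, q (x, w) = ∑ z, ∑ y, q (x, (y, z)) := fun x => by
            rw [Fintype.sum_prod_type]; exact Finset.sum_comm
          rw [Finset.sum_congr rfl fun x _ => h0 x]
          exact Finset.sum_comm
        have e2 : ∀ z, ∑ x, ∑ y, q (x, (y, z)) ≤ pr p Z z := by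
          intro z
          by_cases hz : pr p Z z = 0
          · have h0 : ∑ x, ∑ y, q (x, (y, z)) = 0 :=
              Finset.sum_eq_zero fun x _ => Finset.sum_eq_zero fun y _ => by
                simp only [hq]; rw [if_pos hz]
            rw [h0]; exact pr_nonneg hp Z z
          · refine le_of_eq ?_
            calc ∑ x, ∑ y, q (x, (y, z))
                = ∑ x, pr p (fun ω' => (X ω', Z ω')) (x, z) := by
                  refine Finset.sum_congr rfl fun x _ => ?_
                  have h1 : ∀ y, q (x, (y, z)) = pr p (fun ω' => (X ω', Z ω')) (x, z)
                      * pr p (fun ω' => (Y ω', Z ω')) (y, z) / pr p Z z := fun y => by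
                    simp only [hq]; rw [if_neg hz]
                  rw [Finset.sum_congr rfl fun y _ => h1 y, ← Finset.sum_div,
                    ← Finset.mul_sum, sum_pr_pair Y Z z]
                  field_simp
              _ = pr p Z z := sum_pr_pair X Z z
        calc ∑ v, q v = ∑ z, ∑ x, ∑ y, q (x, (y, z)) := e1
          _ ≤ ∑ z, pr p Z z := Finset.sum_le_sum fun z _ => e2 z
          _ = ∑ ω, p ω := sum_pr Z
          _ = ∑ v, pr p W v := (sum_pr W).symm


/-- derived calculus -/
lemma cmi_mono (hp : ∀ ω, 0 ≤ p ω) {A B B' C : Type*} [Fintype A] [Fintype B] [Fintype B']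
    [Fintype C] {X : Ω → A} {Y : Ω → B} {Y' : Ω → B'} {Z : Ω → C}
    (h : ∀ ω₁ ω₂, Y ω₁ = Y ω₂ → Y' ω₁ = Y' ω₂) :
    cmi p X Y' Z ≤ cmi p X Y Z := by
  have h1 : cmi p X (fun ω => (Y ω, Y' ω)) Z
      = cmi p X Y Z + cmi p X Y' (fun ω => (Y ω, Z ω)) := cmi_chain X Y Y' Z
  have h2 : cmi p X (fun ω => (Y' ω, Y ω)) Z
      = cmi p X Y' Z + cmi p X Y (fun ω => (Y' ω, Z ω)) := cmi_chain X Y' Y Z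
  have h3 : cmi p X (fun ω => (Y ω, Y' ω)) Z = cmi p X (fun ω => (Y' ω, Y ω)) Z :=
    cmi_congr (fun _ _ => Iff.rfl)
      (fun ω₁ ω₂ => by
        constructor <;> (intro hh; simp only [Prod.mk.injEq] at hh ⊢; tauto))
      (fun _ _ => Iff.rfl)
  have h4 : cmi p X Y' (fun ω => (Y ω, Z ω)) = 0 :=
    cmi_of_determ (fun ω₁ ω₂ hz => by
      simp only [Prod.mk.injEq] at hz; exact h ω₁ ω₂ hz.1)
  have h5 : 0 ≤ cmi p X Y (fun ω => (Y' ω, Z ω)) := cmi_nonneg hp _ _ _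
  linarith

lemma cmi_mono_left (hp : ∀ ω, 0 ≤ p ω) {A A' B C : Type*} [Fintype A] [Fintype A'] [Fintype B]
    [Fintype C] {X : Ω → A} {X' : Ω → A'} {Y : Ω → B} {Z : Ω → C}
    (h : ∀ ω₁ ω₂, X ω₁ = X ω₂ → X' ω₁ = X' ω₂) :
    cmi p X' Y Z ≤ cmi p X Y Z := by
  rw [cmi_symm X' Y Z, cmi_symm X Y Z]
  exact cmi_mono hp h

/-- conditioning on an (conditionally) independent variable only increases cmi -/
lemma cmi_cond_ge (hp : ∀ ω, 0 ≤ p ω) {A B C D : Type*} [Fintype A] [Fintype B] [Fintype C]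
    [Fintype D] {X : Ω → A} {Y : Ω → B} {W : Ω → D} {Z : Ω → C}
    (h0 : cmi p X W Z = 0) :
    cmi p X Y Z ≤ cmi p X Y (fun ω => (W ω, Z ω)) := by
  have h1 : cmi p X (fun ω => (W ω, Y ω)) Z
      = cmi p X W Z + cmi p X Y (fun ω => (W ω, Z ω)) := cmi_chain X W Y Z
  have h2 : cmi p X (fun ω => (Y ω, W ω)) Z
      = cmi p X Y Z + cmi p X W (fun ω => (Y ω, Z ω)) := cmi_chain X Y W Z
  have h3 : cmi p X (fun ω => (W ω, Y ω)) Z = cmi p X (fun ω => (Y ω, W ω)) Z :=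
    cmi_congr (fun _ _ => Iff.rfl)
      (fun ω₁ ω₂ => by
        constructor <;> (intro hh; simp only [Prod.mk.injEq] at hh ⊢; tauto))
      (fun _ _ => Iff.rfl)
  have h4 : 0 ≤ cmi p X W (fun ω => (Y ω, Z ω)) := cmi_nonneg hp _ _ _
  linarith

lemma pr_eq_of_iff {A B : Type*} {X : Ω → A} {Y : Ω → B} {a : A} {b : B}
    (h : ∀ ω, X ω = a ↔ Y ω = b) : pr p X a = pr p Y b := by
  unfold pr
  refine Finset.sum_congr rfl fun ω _ => ?_
  by_cases hx : X ω = a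
  · rw [if_pos hx, if_pos ((h ω).1 hx)]
  · rw [if_neg hx, if_neg fun hy => hx ((h ω).2 hy)]

/-- probability of a coordinatewise event under a product pmf factorizes -/
lemma pr_prod {Om : Type*} [Fintype Om] {n : ℕ} (p : Om → ℝ)
    {B : Fin n → Type*} (ψ : ∀ i, Om → B i) (v : ∀ i, B i)
    {τ : Type*} (T : (Fin n → Om) → τ) (t : τ)
    (hT : ∀ ω, T ω = t ↔ ∀ i, ψ i (ω i) = v i) :
    pr (fun ω => ∏ i, p (ω i)) T t = ∏ i, pr p (ψ i) (v i) := by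
  unfold pr
  rw [Fintype.prod_sum (fun i z => if ψ i z = v i then p z else 0)]
  refine Finset.sum_congr rfl fun ω _ => ?_
  by_cases hall : ∀ i, ψ i (ω i) = v i
  · rw [if_pos ((hT ω).2 hall)]
    exact Finset.prod_congr rfl fun i _ => (if_pos (hall i)).symm
  · rw [if_neg fun ht => hall ((hT ω).1 ht)]
    push_neg at hall
    obtain ⟨i, hi⟩ := hall
    exact (Finset.prod_eq_zero (Finset.mem_univ i) (if_neg hi : (if ψ i (ω i) = v i then p (ω i) else 0) = 0)).symm


lemma pr_id {A : Type*} [Fintype A] (p : A → ℝ) (a : A) : pr p (fun z => z) a = p a := by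
  unfold pr
  simp

section Main

variable {K n : ℕ} {X' Y0' : Type} {Y' : Fin K → Type}
  [Fintype X'] [Fintype Y0'] [∀ k, Fintype (Y' k)]
  {p : X' × Y0' × (∀ k, Y' k) → ℝ}

/-- conditional independence of the Y-blocks given (X,Y0), n-letter version -/
lemma indep_blocks (hp : ∀ z, 0 ≤ p z)
    (hmc : ∀ S : Finset (Fin K), ∀ (x : X') (y0 : Y0') (y : ∀ k, Y' k),
      p (x, y0, y) * pr p (fun z => (z.1, z.2.1)) (x, y0)
        = pr p (fun z => (z.1, z.2.1, fun k : {k // k ∈ S} => z.2.2 k))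
            (x, y0, fun k => y k)
          * pr p (fun z => (z.1, z.2.1, fun k : {k // k ∈ Sᶜ} => z.2.2 k))
            (x, y0, fun k => y k))
    (S : Finset (Fin K)) :
    cmi (fun ω : Fin n → (X' × Y0' × (∀ k, Y' k)) => ∏ i, p (ω i))
      (fun ω => fun k : {k // k ∈ S} => fun i => (ω i).2.2 (k : Fin K))
      (fun ω => fun k : {k // k ∈ Sᶜ} => fun i => (ω i).2.2 (k : Fin K))
      (fun ω => (fun i => (ω i).1, fun i => (ω i).2.1)) = 0 := by
  classical
  have hpn : ∀ ω : Fin n → (X' × Y0' × (∀ k, Y' k)), 0 ≤ ∏ i, p (ω i) := fun ω =>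
    Finset.prod_nonneg fun i _ => hp _
  refine cmi_eq_zero hpn fun ω _ => ?_
  have h4 := pr_prod p (fun (_ : Fin n) (z : (X' × Y0' × (∀ k, Y' k))) =>
      ((fun k : {k // k ∈ S} => z.2.2 (k : Fin K), fun k : {k // k ∈ Sᶜ} => z.2.2 (k : Fin K),
        z.1, z.2.1)))
    (fun i => (fun k : {k // k ∈ S} => (ω i).2.2 (k : Fin K),
      fun k : {k // k ∈ Sᶜ} => (ω i).2.2 (k : Fin K), (ω i).1, (ω i).2.1))
    (fun ω' => ((fun k : {k // k ∈ S} => fun i => (ω' i).2.2 (k : Fin K)),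
      ((fun k : {k // k ∈ Sᶜ} => fun i => (ω' i).2.2 (k : Fin K)),
        (fun i => (ω' i).1, fun i => (ω' i).2.1))))
    ((fun k : {k // k ∈ S} => fun i => (ω i).2.2 (k : Fin K)),
      ((fun k : {k // k ∈ Sᶜ} => fun i => (ω i).2.2 (k : Fin K)),
        (fun i => (ω i).1, fun i => (ω i).2.1)))
    (fun ω' => by
      simp only [Prod.mk.injEq, funext_iff]
      constructor
      · rintro ⟨h1, h2, h3, h4⟩ i
        exact ⟨fun k => h1 k i, fun k => h2 k i, h3 i, h4 i⟩
      · intro h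
        exact ⟨fun k i => (h i).1 k, fun k i => (h i).2.1 k,
          fun i => (h i).2.2.1, fun i => (h i).2.2.2⟩)
  have h0 := pr_prod p (fun (_ : Fin n) (z : (X' × Y0' × (∀ k, Y' k))) => (z.1, z.2.1))
    (fun i => ((ω i).1, (ω i).2.1))
    (fun ω' => (fun i => (ω' i).1, fun i => (ω' i).2.1))
    (fun i => (ω i).1, fun i => (ω i).2.1)
    (fun ω' => by
      simp only [Prod.mk.injEq, funext_iff]
      constructor
      · rintro ⟨h1, h2⟩ i; exact ⟨h1 i, h2 i⟩
      · intro h; exact ⟨fun i => (h i).1, fun i => (h i).2⟩)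
  have hS := pr_prod p (fun (_ : Fin n) (z : (X' × Y0' × (∀ k, Y' k))) =>
      ((fun k : {k // k ∈ S} => z.2.2 (k : Fin K)), z.1, z.2.1))
    (fun i => ((fun k : {k // k ∈ S} => (ω i).2.2 (k : Fin K)), (ω i).1, (ω i).2.1))
    (fun ω' => ((fun k : {k // k ∈ S} => fun i => (ω' i).2.2 (k : Fin K)),
      (fun i => (ω' i).1, fun i => (ω' i).2.1)))
    ((fun k : {k // k ∈ S} => fun i => (ω i).2.2 (k : Fin K)),
      (fun i => (ω i).1, fun i => (ω i).2.1))
    (fun ω' => by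
      simp only [Prod.mk.injEq, funext_iff]
      constructor
      · rintro ⟨h1, h2, h3⟩ i; exact ⟨fun k => h1 k i, h2 i, h3 i⟩
      · intro h; exact ⟨fun k i => (h i).1 k, fun i => (h i).2.1, fun i => (h i).2.2⟩)
  have hSc := pr_prod p (fun (_ : Fin n) (z : (X' × Y0' × (∀ k, Y' k))) =>
      ((fun k : {k // k ∈ Sᶜ} => z.2.2 (k : Fin K)), z.1, z.2.1))
    (fun i => ((fun k : {k // k ∈ Sᶜ} => (ω i).2.2 (k : Fin K)), (ω i).1, (ω i).2.1))
    (fun ω' => ((fun k : {k // k ∈ Sᶜ} => fun i => (ω' i).2.2 (k : Fin K)),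
      (fun i => (ω' i).1, fun i => (ω' i).2.1)))
    ((fun k : {k // k ∈ Sᶜ} => fun i => (ω i).2.2 (k : Fin K)),
      (fun i => (ω i).1, fun i => (ω i).2.1))
    (fun ω' => by
      simp only [Prod.mk.injEq, funext_iff]
      constructor
      · rintro ⟨h1, h2, h3⟩ i; exact ⟨fun k => h1 k i, h2 i, h3 i⟩
      · intro h; exact ⟨fun k i => (h i).1 k, fun i => (h i).2.1, fun i => (h i).2.2⟩)
  rw [h4, h0, hS, hSc, ← Finset.prod_mul_distrib, ← Finset.prod_mul_distrib]
  refine Finset.prod_congr rfl fun i _ => ?_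
  beta_reduce
  -- single-letter identity
  obtain ⟨x, y0, y⟩ := ω i
  have hpr4 : pr p (fun z : (X' × Y0' × (∀ k, Y' k)) =>
      ((fun k : {k // k ∈ S} => z.2.2 (k : Fin K), fun k : {k // k ∈ Sᶜ} => z.2.2 (k : Fin K),
        z.1, z.2.1)))
      ((fun k : {k // k ∈ S} => y (k : Fin K), fun k : {k // k ∈ Sᶜ} => y (k : Fin K), x, y0))
      = p (x, y0, y) := by
    rw [pr_eq_of_iff (Y := fun z : (X' × Y0' × (∀ k, Y' k)) => z) (b := (x, y0, y)) ?_, pr_id]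
    intro z
    constructor
    · intro h
      simp only [Prod.mk.injEq, funext_iff] at h
      obtain ⟨h1, h2, h3, h4⟩ := h
      refine Prod.ext h3 (Prod.ext h4 (funext fun k => ?_))
      by_cases hk : k ∈ S
      · exact h1 ⟨k, hk⟩
      · exact h2 ⟨k, Finset.mem_compl.2 hk⟩
    · rintro rfl; rfl
  have hprS : pr p (fun z : (X' × Y0' × (∀ k, Y' k)) =>
      ((fun k : {k // k ∈ S} => z.2.2 (k : Fin K)), z.1, z.2.1))
      ((fun k : {k // k ∈ S} => y (k : Fin K)), x, y0)
      = pr p (fun z : (X' × Y0' × (∀ k, Y' k)) => (z.1, z.2.1, fun k : {k // k ∈ S} => z.2.2 (k : Fin K)))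
        (x, y0, fun k : {k // k ∈ S} => y (k : Fin K)) := by
    refine pr_eq_of_iff fun z => ?_
    simp only [Prod.mk.injEq]
    tauto
  have hprSc : pr p (fun z : (X' × Y0' × (∀ k, Y' k)) =>
      ((fun k : {k // k ∈ Sᶜ} => z.2.2 (k : Fin K)), z.1, z.2.1))
      ((fun k : {k // k ∈ Sᶜ} => y (k : Fin K)), x, y0)
      = pr p (fun z : (X' × Y0' × (∀ k, Y' k)) => (z.1, z.2.1, fun k : {k // k ∈ Sᶜ} => z.2.2 (k : Fin K)))
        (x, y0, fun k : {k // k ∈ Sᶜ} => y (k : Fin K)) := by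
    refine pr_eq_of_iff fun z => ?_
    simp only [Prod.mk.injEq]
    tauto
  rw [hpr4, hprS, hprSc]
  exact hmc S x y0 y

/-- `Y_{k,i}` is conditionally independent of the prefix `Y_k^{<i}` given all of `(X^n, Y_0^n)`,
under the product pmf. -/
lemma indep_coord (hp : ∀ z, 0 ≤ p z) (k : Fin K) (i : Fin n) :
    cmi (fun ω : Fin n → (X' × Y0' × (∀ k, Y' k)) => ∏ j, p (ω j))
      (fun ω => (ω i).2.2 k)
      (fun ω => fun j : Fin n => if (j : ℕ) < (i : ℕ) then some ((ω j).2.2 k) else none)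
      (fun ω => (fun j => (ω j).1, fun j => (ω j).2.1)) = 0 := by
  classical
  have hpn : ∀ ω : Fin n → (X' × Y0' × (∀ k, Y' k)), 0 ≤ ∏ j, p (ω j) := fun ω =>
    Finset.prod_nonneg fun j _ => hp _
  refine cmi_eq_zero hpn fun ω _ => ?_
  set ψ4 : Fin n → (X' × Y0' × (∀ k, Y' k)) → Option (Y' k) × Option (Y' k) × X' × Y0' :=
    fun j z => ((if j = i then some (z.2.2 k) else none),
      (if (j : ℕ) < (i : ℕ) then some (z.2.2 k) else none), z.1, z.2.1) with hψ4
  set ψA : Fin n → (X' × Y0' × (∀ k, Y' k)) → Option (Y' k) × X' × Y0' :=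
    fun j z => ((if j = i then some (z.2.2 k) else none), z.1, z.2.1) with hψA
  set ψB : Fin n → (X' × Y0' × (∀ k, Y' k)) → Option (Y' k) × X' × Y0' :=
    fun j z => ((if (j : ℕ) < (i : ℕ) then some (z.2.2 k) else none), z.1, z.2.1) with hψB
  have h4 := pr_prod p ψ4 (fun j => ψ4 j (ω j))
    (fun ω' => ((ω' i).2.2 k,
      ((fun j : Fin n => if (j : ℕ) < (i : ℕ) then some ((ω' j).2.2 k) else none),
        (fun j => (ω' j).1, fun j => (ω' j).2.1))))
    ((ω i).2.2 k,
      ((fun j : Fin n => if (j : ℕ) < (i : ℕ) then some ((ω j).2.2 k) else none),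
        (fun j => (ω j).1, fun j => (ω j).2.1)))
    (fun ω' => by
      simp only [hψ4, Prod.mk.injEq, funext_iff]
      constructor
      · rintro ⟨h1, h2, h3, h4⟩ j
        refine ⟨?_, h2 j, h3 j, h4 j⟩
        by_cases hj : j = i
        · subst hj; simp [h1]
        · simp [hj]
      · intro h
        refine ⟨?_, fun j => (h j).2.1, fun j => (h j).2.2.1, fun j => (h j).2.2.2⟩
        have := (h i).1
        simpa using this)
  have h0 := pr_prod p (fun (_ : Fin n) (z : X' × Y0' × (∀ k, Y' k)) => (z.1, z.2.1))
    (fun j => ((ω j).1, (ω j).2.1))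
    (fun ω' => (fun j => (ω' j).1, fun j => (ω' j).2.1))
    (fun j => (ω j).1, fun j => (ω j).2.1)
    (fun ω' => by
      simp only [Prod.mk.injEq, funext_iff]
      constructor
      · rintro ⟨h1, h2⟩ j; exact ⟨h1 j, h2 j⟩
      · intro h; exact ⟨fun j => (h j).1, fun j => (h j).2⟩)
  have hA := pr_prod p ψA (fun j => ψA j (ω j))
    (fun ω' => ((ω' i).2.2 k, (fun j => (ω' j).1, fun j => (ω' j).2.1)))
    ((ω i).2.2 k, (fun j => (ω j).1, fun j => (ω j).2.1))
    (fun ω' => by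
      simp only [hψA, Prod.mk.injEq, funext_iff]
      constructor
      · rintro ⟨h1, h2, h3⟩ j
        refine ⟨?_, h2 j, h3 j⟩
        by_cases hj : j = i
        · subst hj; simp [h1]
        · simp [hj]
      · intro h
        refine ⟨?_, fun j => (h j).2.1, fun j => (h j).2.2⟩
        have := (h i).1
        simpa using this)
  have hB := pr_prod p ψB (fun j => ψB j (ω j))
    (fun ω' => ((fun j : Fin n => if (j : ℕ) < (i : ℕ) then some ((ω' j).2.2 k) else none),
      (fun j => (ω' j).1, fun j => (ω' j).2.1)))
    ((fun j : Fin n => if (j : ℕ) < (i : ℕ) then some ((ω j).2.2 k) else none),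
      (fun j => (ω j).1, fun j => (ω j).2.1))
    (fun ω' => by
      simp only [hψB, Prod.mk.injEq, funext_iff]
      constructor
      · rintro ⟨h1, h2, h3⟩ j; exact ⟨h1 j, h2 j, h3 j⟩
      · intro h; exact ⟨fun j => (h j).1, fun j => (h j).2.1, fun j => (h j).2.2⟩)
  rw [h4, h0, hA, hB, ← Finset.prod_mul_distrib, ← Finset.prod_mul_distrib]
  refine Finset.prod_congr rfl fun j _ => ?_
  by_cases hj : j = i
  · subst hj
    have e1 : pr p (ψ4 j) (ψ4 j (ω j)) = pr p (ψA j) (ψA j (ω j)) := by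
      refine pr_eq_of_iff fun z => ?_
      simp only [hψ4, hψA, Prod.mk.injEq, lt_irrefl, if_neg (lt_irrefl (j : ℕ)), if_pos rfl]
      tauto
    have e2 : pr p (ψB j) (ψB j (ω j))
        = pr p (fun z : X' × Y0' × (∀ k, Y' k) => (z.1, z.2.1)) ((ω j).1, (ω j).2.1) := by
      refine pr_eq_of_iff fun z => ?_
      simp only [hψB, Prod.mk.injEq, if_neg (lt_irrefl (j : ℕ))]
      tauto
    rw [e1, e2]
  · have e1 : pr p (ψ4 j) (ψ4 j (ω j)) = pr p (ψB j) (ψB j (ω j)) := by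
      refine pr_eq_of_iff fun z => ?_
      simp only [hψ4, hψB, Prod.mk.injEq, if_neg hj]
      tauto
    have e2 : pr p (ψA j) (ψA j (ω j))
        = pr p (fun z : X' × Y0' × (∀ k, Y' k) => (z.1, z.2.1)) ((ω j).1, (ω j).2.1) := by
      refine pr_eq_of_iff fun z => ?_
      simp only [hψA, Prod.mk.injEq, if_neg hj]
      tauto
    rw [e1, e2]
    ring

section Enc
variable {M : Fin K → Type} [∀ k, Fintype (M k)] (φ : ∀ k, (Fin n → Y' k) → M k)

/-- telescoping / single-letterization for one encoder -/
lemma tele (hp : ∀ z, 0 ≤ p z) (k : Fin K) :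
    ∀ m : ℕ, m ≤ n →
    cmi (fun ω : Fin n → (X' × Y0' × (∀ k, Y' k)) => ∏ j, p (ω j))
      (fun ω => φ k (fun i => (ω i).2.2 k))
      (fun ω => fun j : Fin n => if (j : ℕ) < m then some ((ω j).2.2 k) else none)
      (fun ω => (fun j => (ω j).1, fun j => (ω j).2.1))
    = ∑ i ∈ Finset.univ.filter (fun i : Fin n => (i : ℕ) < m),
        cmi (fun ω : Fin n → (X' × Y0' × (∀ k, Y' k)) => ∏ j, p (ω j))
          (fun ω => φ k (fun i => (ω i).2.2 k))
          (fun ω => (ω i).2.2 k)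
          (fun ω => ((fun j : Fin n => if (j : ℕ) < (i : ℕ) then some ((ω j).2.2 k) else none),
            (fun j => (ω j).1, fun j => (ω j).2.1))) := by
  intro m
  induction m with
  | zero =>
    intro _
    have h0 : cmi (fun ω : Fin n → (X' × Y0' × (∀ k, Y' k)) => ∏ j, p (ω j))
        (fun ω => φ k (fun i => (ω i).2.2 k))
        (fun ω => fun j : Fin n => if (j : ℕ) < 0 then some ((ω j).2.2 k) else none)
        (fun ω => (fun j => (ω j).1, fun j => (ω j).2.1)) = 0 :=
      cmi_of_determ (fun ω₁ ω₂ _ => by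
        funext j; rw [if_neg (Nat.not_lt_zero _), if_neg (Nat.not_lt_zero _)])
    rw [h0]
    have : Finset.univ.filter (fun i : Fin n => (i : ℕ) < 0) = ∅ := by
      ext i; simp
    rw [this, Finset.sum_empty]
  | succ m ih =>
    intro hm1
    have hm : m < n := lt_of_lt_of_le (Nat.lt_succ_self m) hm1
    set i₀ : Fin n := ⟨m, hm⟩ with hi₀
    have hval : (i₀ : ℕ) = m := rfl
    have hcongr : cmi (fun ω : Fin n → (X' × Y0' × (∀ k, Y' k)) => ∏ j, p (ω j))
        (fun ω => φ k (fun i => (ω i).2.2 k))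
        (fun ω => fun j : Fin n => if (j : ℕ) < m + 1 then some ((ω j).2.2 k) else none)
        (fun ω => (fun j => (ω j).1, fun j => (ω j).2.1))
        = cmi (fun ω : Fin n → (X' × Y0' × (∀ k, Y' k)) => ∏ j, p (ω j))
        (fun ω => φ k (fun i => (ω i).2.2 k))
        (fun ω => ((fun j : Fin n => if (j : ℕ) < m then some ((ω j).2.2 k) else none),
          (ω i₀).2.2 k))
        (fun ω => (fun j => (ω j).1, fun j => (ω j).2.1)) := by
      refine cmi_congr (fun _ _ => Iff.rfl) (fun ω₁ ω₂ => ?_) (fun _ _ => Iff.rfl)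
      constructor
      · intro h
        have hj : ∀ j : Fin n, (if (j : ℕ) < m + 1 then some ((ω₁ j).2.2 k) else none)
            = (if (j : ℕ) < m + 1 then some ((ω₂ j).2.2 k) else none) := fun j => congrFun h j
        refine Prod.ext (funext fun j => ?_) ?_
        · show (if (j : ℕ) < m then some ((ω₁ j).2.2 k) else none)
            = (if (j : ℕ) < m then some ((ω₂ j).2.2 k) else none)
          by_cases hjm : (j : ℕ) < m
          · have := hj j
            rw [if_pos (Nat.lt_succ_of_lt hjm), if_pos (Nat.lt_succ_of_lt hjm)] at this
            rw [if_pos hjm, if_pos hjm, Option.some_inj.1 this]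
          · rw [if_neg hjm, if_neg hjm]
        · show (ω₁ i₀).2.2 k = (ω₂ i₀).2.2 k
          have := hj i₀
          rw [if_pos (Nat.lt_succ_self m), if_pos (Nat.lt_succ_self m)] at this
          exact Option.some_inj.1 this
      · intro h
        have h1 : (fun j : Fin n => if (j : ℕ) < m then some ((ω₁ j).2.2 k) else none)
            = (fun j : Fin n => if (j : ℕ) < m then some ((ω₂ j).2.2 k) else none) :=
          congrArg Prod.fst h
        have h2 : (ω₁ i₀).2.2 k = (ω₂ i₀).2.2 k := congrArg Prod.snd h
        funext j
        by_cases hjm1 : (j : ℕ) < m + 1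
        · rw [if_pos hjm1, if_pos hjm1]
          by_cases hjm : (j : ℕ) < m
          · have := congrFun h1 j
            rw [if_pos hjm, if_pos hjm] at this
            rw [Option.some_inj.1 this]
          · have hje : j = i₀ := Fin.ext (by omega)
            rw [hje, h2]
        · rw [if_neg hjm1, if_neg hjm1]
    rw [hcongr, cmi_chain]
    have hfil : Finset.univ.filter (fun i : Fin n => (i : ℕ) < m + 1)
        = insert i₀ (Finset.univ.filter (fun i : Fin n => (i : ℕ) < m)) := by
      ext j
      simp only [Finset.mem_filter, Finset.mem_insert, Finset.mem_univ, true_and]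
      constructor
      · intro hj
        by_cases hjm : (j : ℕ) < m
        · exact Or.inr hjm
        · exact Or.inl (Fin.ext (by omega))
      · rintro (rfl | hj)
        · exact Nat.lt_succ_self m
        · exact Nat.lt_succ_of_lt hj
    rw [hfil, Finset.sum_insert (by simp [hi₀])]
    rw [ih (le_of_lt hm1)]
    ring

/-- splitting off the encoders one at a time -/
lemma step2
    (hp : ∀ z, 0 ≤ p z)
    (hmc : ∀ S : Finset (Fin K), ∀ (x : X') (y0 : Y0') (y : ∀ k, Y' k),
      p (x, y0, y) * pr p (fun z => (z.1, z.2.1)) (x, y0)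
        = pr p (fun z => (z.1, z.2.1, fun k : {k // k ∈ S} => z.2.2 k))
            (x, y0, fun k => y k)
          * pr p (fun z => (z.1, z.2.1, fun k : {k // k ∈ Sᶜ} => z.2.2 k))
            (x, y0, fun k => y k))
    (s : Finset (Fin K)) :
    ∑ k ∈ s, cmi (fun ω : Fin n → (X' × Y0' × (∀ k, Y' k)) => ∏ j, p (ω j))
        (fun ω => φ k (fun i => (ω i).2.2 k))
        (fun ω => fun i : Fin n => (ω i).2.2 k)
        (fun ω => (fun j => (ω j).1, fun j => (ω j).2.1))
    ≤ cmi (fun ω : Fin n → (X' × Y0' × (∀ k, Y' k)) => ∏ j, p (ω j))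
        (fun ω => fun k : {k // k ∈ s} => φ (k : Fin K) (fun i => (ω i).2.2 (k : Fin K)))
        (fun ω => fun k : {k // k ∈ s} => fun i : Fin n => (ω i).2.2 (k : Fin K))
        (fun ω => (fun j => (ω j).1, fun j => (ω j).2.1)) := by
  classical
  have hpn : ∀ ω : Fin n → (X' × Y0' × (∀ k, Y' k)), 0 ≤ ∏ j, p (ω j) := fun ω =>
    Finset.prod_nonneg fun j _ => hp _
  induction s using Finset.induction_on with
  | empty => rw [Finset.sum_empty]; exact cmi_nonneg hpn _ _ _
  | insert a s ha ih =>
    rw [Finset.sum_insert ha]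
    -- split the insert into a pair
    have hsplit : cmi (fun ω : Fin n → (X' × Y0' × (∀ k, Y' k)) => ∏ j, p (ω j))
        (fun ω => fun k : {k // k ∈ insert a s} => φ (k : Fin K) (fun i => (ω i).2.2 (k : Fin K)))
        (fun ω => fun k : {k // k ∈ insert a s} => fun i : Fin n => (ω i).2.2 (k : Fin K))
        (fun ω => (fun j => (ω j).1, fun j => (ω j).2.1))
        = cmi (fun ω : Fin n → (X' × Y0' × (∀ k, Y' k)) => ∏ j, p (ω j))
        (fun ω => (φ a (fun i => (ω i).2.2 a),
          fun k : {k // k ∈ s} => φ (k : Fin K) (fun i => (ω i).2.2 (k : Fin K))))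
        (fun ω => ((fun i : Fin n => (ω i).2.2 a),
          fun k : {k // k ∈ s} => fun i : Fin n => (ω i).2.2 (k : Fin K)))
        (fun ω => (fun j => (ω j).1, fun j => (ω j).2.1)) := by
      refine cmi_congr (fun ω₁ ω₂ => ?_) (fun ω₁ ω₂ => ?_) (fun _ _ => Iff.rfl)
      · constructor
        · intro h
          refine Prod.ext ?_ (funext fun k => ?_)
          · exact congrFun h ⟨a, Finset.mem_insert_self a s⟩
          · exact congrFun h ⟨(k : Fin K), Finset.mem_insert_of_mem k.2⟩
        · intro h
          funext k
          obtain ⟨k, hk⟩ := k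
          rcases Finset.mem_insert.1 hk with rfl | hks
          · exact congrArg Prod.fst h
          · exact congrFun (congrArg Prod.snd h) ⟨k, hks⟩
      · constructor
        · intro h
          refine Prod.ext ?_ (funext fun k => ?_)
          · exact congrFun h ⟨a, Finset.mem_insert_self a s⟩
          · exact congrFun h ⟨(k : Fin K), Finset.mem_insert_of_mem k.2⟩
        · intro h
          funext k
          obtain ⟨k, hk⟩ := k
          rcases Finset.mem_insert.1 hk with rfl | hks
          · exact congrArg Prod.fst h
          · exact congrFun (congrArg Prod.snd h) ⟨k, hks⟩
    rw [hsplit, cmi_chain]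
    -- first summand
    have hb1 : cmi (fun ω : Fin n → (X' × Y0' × (∀ k, Y' k)) => ∏ j, p (ω j))
        (fun ω => φ a (fun i => (ω i).2.2 a))
        (fun ω => fun i : Fin n => (ω i).2.2 a)
        (fun ω => (fun j => (ω j).1, fun j => (ω j).2.1))
        ≤ cmi (fun ω : Fin n → (X' × Y0' × (∀ k, Y' k)) => ∏ j, p (ω j))
        (fun ω => (φ a (fun i => (ω i).2.2 a),
          fun k : {k // k ∈ s} => φ (k : Fin K) (fun i => (ω i).2.2 (k : Fin K))))
        (fun ω => fun i : Fin n => (ω i).2.2 a)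
        (fun ω => (fun j => (ω j).1, fun j => (ω j).2.1)) := by
      rw [cmi_symm (p := fun ω : Fin n → (X' × Y0' × (∀ k, Y' k)) => ∏ j, p (ω j))
          (fun ω => φ a (fun i => (ω i).2.2 a)),
        cmi_symm (p := fun ω : Fin n → (X' × Y0' × (∀ k, Y' k)) => ∏ j, p (ω j))
          (fun ω => (φ a (fun i => (ω i).2.2 a),
            fun k : {k // k ∈ s} => φ (k : Fin K) (fun i => (ω i).2.2 (k : Fin K))))]
      exact cmi_mono hpn (fun ω₁ ω₂ h => congrArg Prod.fst h)
    -- zero fact : As s independent of Ak a given W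
    have hzero : cmi (fun ω : Fin n → (X' × Y0' × (∀ k, Y' k)) => ∏ j, p (ω j))
        (fun ω => fun k : {k // k ∈ s} => fun i : Fin n => (ω i).2.2 (k : Fin K))
        (fun ω => fun i : Fin n => (ω i).2.2 a)
        (fun ω => (fun j => (ω j).1, fun j => (ω j).2.1)) = 0 := by
      have h1 := indep_blocks (n := n) hp hmc {a}
      rw [cmi_symm] at h1
      have h2 : cmi (fun ω : Fin n → (X' × Y0' × (∀ k, Y' k)) => ∏ j, p (ω j))
          (fun ω => fun k : {k // k ∈ ({a} : Finset (Fin K))ᶜ} => fun i : Fin n =>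
            (ω i).2.2 (k : Fin K))
          (fun ω => fun i : Fin n => (ω i).2.2 a)
          (fun ω => (fun j => (ω j).1, fun j => (ω j).2.1)) ≤ 0 := by
        rw [← h1]
        exact cmi_mono hpn (fun ω₁ ω₂ h =>
          funext fun i => congrFun (congrFun h ⟨a, Finset.mem_singleton_self a⟩) i)
      have h3 : cmi (fun ω : Fin n → (X' × Y0' × (∀ k, Y' k)) => ∏ j, p (ω j))
          (fun ω => fun k : {k // k ∈ s} => fun i : Fin n => (ω i).2.2 (k : Fin K))
          (fun ω => fun i : Fin n => (ω i).2.2 a)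
          (fun ω => (fun j => (ω j).1, fun j => (ω j).2.1))
          ≤ cmi (fun ω : Fin n → (X' × Y0' × (∀ k, Y' k)) => ∏ j, p (ω j))
          (fun ω => fun k : {k // k ∈ ({a} : Finset (Fin K))ᶜ} => fun i : Fin n =>
            (ω i).2.2 (k : Fin K))
          (fun ω => fun i : Fin n => (ω i).2.2 a)
          (fun ω => (fun j => (ω j).1, fun j => (ω j).2.1)) := by
        refine cmi_mono_left hpn (fun ω₁ ω₂ h => funext fun k => ?_)
        have hk : (k : Fin K) ∈ ({a} : Finset (Fin K))ᶜ := by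
          rw [Finset.mem_compl, Finset.mem_singleton]
          intro hka
          exact ha (hka ▸ k.2)
        exact congrFun h ⟨(k : Fin K), hk⟩
      exact le_antisymm (le_trans h3 h2) (cmi_nonneg hpn _ _ _)
    -- second summand
    have hb2 : ∑ k ∈ s, cmi (fun ω : Fin n → (X' × Y0' × (∀ k, Y' k)) => ∏ j, p (ω j))
        (fun ω => φ k (fun i => (ω i).2.2 k))
        (fun ω => fun i : Fin n => (ω i).2.2 k)
        (fun ω => (fun j => (ω j).1, fun j => (ω j).2.1))
        ≤ cmi (fun ω : Fin n → (X' × Y0' × (∀ k, Y' k)) => ∏ j, p (ω j))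
        (fun ω => (φ a (fun i => (ω i).2.2 a),
          fun k : {k // k ∈ s} => φ (k : Fin K) (fun i => (ω i).2.2 (k : Fin K))))
        (fun ω => fun k : {k // k ∈ s} => fun i : Fin n => (ω i).2.2 (k : Fin K))
        (fun ω => ((fun i : Fin n => (ω i).2.2 a),
          (fun j => (ω j).1, fun j => (ω j).2.1))) := by
      calc ∑ k ∈ s, cmi (fun ω : Fin n → (X' × Y0' × (∀ k, Y' k)) => ∏ j, p (ω j))
            (fun ω => φ k (fun i => (ω i).2.2 k))
            (fun ω => fun i : Fin n => (ω i).2.2 k)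
            (fun ω => (fun j => (ω j).1, fun j => (ω j).2.1))
          ≤ cmi (fun ω : Fin n → (X' × Y0' × (∀ k, Y' k)) => ∏ j, p (ω j))
            (fun ω => fun k : {k // k ∈ s} => φ (k : Fin K) (fun i => (ω i).2.2 (k : Fin K)))
            (fun ω => fun k : {k // k ∈ s} => fun i : Fin n => (ω i).2.2 (k : Fin K))
            (fun ω => (fun j => (ω j).1, fun j => (ω j).2.1)) := ih
        _ = cmi (fun ω : Fin n → (X' × Y0' × (∀ k, Y' k)) => ∏ j, p (ω j))
            (fun ω => fun k : {k // k ∈ s} => fun i : Fin n => (ω i).2.2 (k : Fin K))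
            (fun ω => fun k : {k // k ∈ s} => φ (k : Fin K) (fun i => (ω i).2.2 (k : Fin K)))
            (fun ω => (fun j => (ω j).1, fun j => (ω j).2.1)) := cmi_symm _ _ _
        _ ≤ cmi (fun ω : Fin n → (X' × Y0' × (∀ k, Y' k)) => ∏ j, p (ω j))
            (fun ω => fun k : {k // k ∈ s} => fun i : Fin n => (ω i).2.2 (k : Fin K))
            (fun ω => fun k : {k // k ∈ s} => φ (k : Fin K) (fun i => (ω i).2.2 (k : Fin K)))
            (fun ω => ((fun i : Fin n => (ω i).2.2 a),
              (fun j => (ω j).1, fun j => (ω j).2.1))) := cmi_cond_ge hpn hzero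
        _ ≤ cmi (fun ω : Fin n → (X' × Y0' × (∀ k, Y' k)) => ∏ j, p (ω j))
            (fun ω => fun k : {k // k ∈ s} => fun i : Fin n => (ω i).2.2 (k : Fin K))
            (fun ω => (φ a (fun i => (ω i).2.2 a),
              fun k : {k // k ∈ s} => φ (k : Fin K) (fun i => (ω i).2.2 (k : Fin K))))
            (fun ω => ((fun i : Fin n => (ω i).2.2 a),
              (fun j => (ω j).1, fun j => (ω j).2.1))) :=
          cmi_mono hpn (fun ω₁ ω₂ h => congrArg Prod.snd h)
        _ = cmi (fun ω : Fin n → (X' × Y0' × (∀ k, Y' k)) => ∏ j, p (ω j))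
            (fun ω => (φ a (fun i => (ω i).2.2 a),
              fun k : {k // k ∈ s} => φ (k : Fin K) (fun i => (ω i).2.2 (k : Fin K))))
            (fun ω => fun k : {k // k ∈ s} => fun i : Fin n => (ω i).2.2 (k : Fin K))
            (fun ω => ((fun i : Fin n => (ω i).2.2 a),
              (fun j => (ω j).1, fun j => (ω j).2.1))) := cmi_symm _ _ _
    linarith


lemma rhs_term (hp : ∀ z, 0 ≤ p z) (k : Fin K) (i : Fin n) :
    cmi (fun ω : Fin n → (X' × Y0' × (∀ k, Y' k)) => ∏ j, p (ω j))
      (fun ω => (φ k (fun i' => (ω i').2.2 k),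
        fun j : Fin n => if (j : ℕ) < (i : ℕ) then some ((ω j).2.2 k) else none))
      (fun ω => (ω i).2.2 k)
      (fun ω => ((ω i).1, (ω i).2.1,
        ((fun j : Fin n => if j ≠ i then some ((ω j).1) else none),
         (fun j : Fin n => if j ≠ i then some ((ω j).2.1) else none))))
    = cmi (fun ω : Fin n → (X' × Y0' × (∀ k, Y' k)) => ∏ j, p (ω j))
      (fun ω => φ k (fun i' => (ω i').2.2 k))
      (fun ω => (ω i).2.2 k)
      (fun ω => ((fun j : Fin n => if (j : ℕ) < (i : ℕ) then some ((ω j).2.2 k) else none),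
        (fun j => (ω j).1, fun j => (ω j).2.1))) := by
  classical
  have hpn : ∀ ω : Fin n → (X' × Y0' × (∀ k, Y' k)), 0 ≤ ∏ j, p (ω j) := fun ω =>
    Finset.prod_nonneg fun j _ => hp _
  rw [cmi_symm]
  have hcongr : cmi (fun ω : Fin n → (X' × Y0' × (∀ k, Y' k)) => ∏ j, p (ω j))
      (fun ω => (ω i).2.2 k)
      (fun ω => (φ k (fun i' => (ω i').2.2 k),
        fun j : Fin n => if (j : ℕ) < (i : ℕ) then some ((ω j).2.2 k) else none))
      (fun ω => ((ω i).1, (ω i).2.1,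
        ((fun j : Fin n => if j ≠ i then some ((ω j).1) else none),
         (fun j : Fin n => if j ≠ i then some ((ω j).2.1) else none))))
      = cmi (fun ω : Fin n → (X' × Y0' × (∀ k, Y' k)) => ∏ j, p (ω j))
      (fun ω => (ω i).2.2 k)
      (fun ω => ((fun j : Fin n => if (j : ℕ) < (i : ℕ) then some ((ω j).2.2 k) else none),
        φ k (fun i' => (ω i').2.2 k)))
      (fun ω => (fun j => (ω j).1, fun j => (ω j).2.1)) := by
    refine cmi_congr (fun _ _ => Iff.rfl) (fun ω₁ ω₂ => ?_) (fun ω₁ ω₂ => ?_)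
    · constructor
      · intro h
        simp only [Prod.mk.injEq] at h ⊢
        exact ⟨h.2, h.1⟩
      · intro h
        simp only [Prod.mk.injEq] at h ⊢
        exact ⟨h.2, h.1⟩
    · constructor
      · intro h
        simp only [Prod.mk.injEq, funext_iff] at h
        obtain ⟨h1, h2, h3, h4⟩ := h
        refine Prod.ext (funext fun j => ?_) (funext fun j => ?_)
        · by_cases hj : j = i
          · subst hj; exact h1
          · have := h3 j
            rw [if_pos hj, if_pos hj] at this
            exact Option.some_inj.1 this
        · by_cases hj : j = i
          · subst hj; exact h2
          · have := h4 j
            rw [if_pos hj, if_pos hj] at this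
            exact Option.some_inj.1 this
      · intro h
        have h1 : ∀ j, (ω₁ j).1 = (ω₂ j).1 := fun j => congrFun (congrArg Prod.fst h) j
        have h2 : ∀ j, (ω₁ j).2.1 = (ω₂ j).2.1 := fun j => congrFun (congrArg Prod.snd h) j
        refine Prod.ext (h1 i) (Prod.ext (h2 i) (Prod.ext (funext fun j => ?_)
          (funext fun j => ?_)))
        · show (if j ≠ i then some ((ω₁ j).1) else none)
            = (if j ≠ i then some ((ω₂ j).1) else none)
          by_cases hj : j = i
          · rw [if_neg (by simp [hj]), if_neg (by simp [hj])]
          · rw [if_pos hj, if_pos hj, h1 j]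
        · show (if j ≠ i then some ((ω₁ j).2.1) else none)
            = (if j ≠ i then some ((ω₂ j).2.1) else none)
          by_cases hj : j = i
          · rw [if_neg (by simp [hj]), if_neg (by simp [hj])]
          · rw [if_pos hj, if_pos hj, h2 j]
  rw [hcongr, cmi_chain, indep_coord hp k i, zero_add, cmi_symm]

end Enc

end Main

end S6

/-- single-letterization bound
`I(J_S; Y_S^n | X^n, J_{S^c}, Y_0^n) ≥ Σ_{k∈S} Σ_{i=1}^n I(U_{k,i}; Y_{k,i} | X_i, Y_{0,i}, Q_i)`,
for i.i.d. copies of a source in which `Y_1,…,Y_K` are conditionally independent given `(X,Y_0)`,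
where `J_k = φ_k(Y_k^n)`, `U_{k,i} = (J_k, Y_k^{i−1})` and
`Q_i = (X^{i−1}, X_{i+1}^n, Y_0^{i−1}, Y_{0,i+1}^n)` (prefixes/suffixes encoded as
`Option`-masked strings). -/
theorem stmt6 {K n : ℕ} (hn : 0 < n)
    {X' Y0' : Type} {Y' : Fin K → Type}
    [Fintype X'] [Fintype Y0'] [∀ k, Fintype (Y' k)]
    (p : X' × Y0' × (∀ k, Y' k) → ℝ)
    (hp : ∀ z, 0 ≤ p z) (hp1 : ∑ z, p z = 1)
    -- Markov chains Y_S — (X,Y_0) — Y_{S^c} for every S ⊆ {1,…,K}: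
    (hmc : ∀ S : Finset (Fin K), ∀ (x : X') (y0 : Y0') (y : ∀ k, Y' k),
      p (x, y0, y) * pr p (fun z => (z.1, z.2.1)) (x, y0)
        = pr p (fun z => (z.1, z.2.1, fun k : {k // k ∈ S} => z.2.2 k))
            (x, y0, fun k => y k)
          * pr p (fun z => (z.1, z.2.1, fun k : {k // k ∈ Sᶜ} => z.2.2 k))
            (x, y0, fun k => y k))
    {M : Fin K → Type} [∀ k, Fintype (M k)]
    (φ : ∀ k, (Fin n → Y' k) → M k) :
    -- the i.i.d. pmf on n copies
    let pn : (Fin n → X' × Y0' × (∀ k, Y' k)) → ℝ := fun ω => ∏ i, p (ω i)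
    -- J_k := φ_k(Y_k^n)
    let J : ∀ _ : Fin K, (Fin n → X' × Y0' × (∀ k, Y' k)) → M _ :=
      fun k ω => φ k (fun i => (ω i).2.2 k)
    -- U_{k,i} := (J_k, Y_k^{i−1})
    let U : ∀ k : Fin K, Fin n → (Fin n → X' × Y0' × (∀ k, Y' k)) →
        M k × (Fin n → Option (Y' k)) :=
      fun k i ω => (J k ω, fun j => if (j : ℕ) < (i : ℕ) then some ((ω j).2.2 k) else none)
    -- Q_i := (X^{i−1}, X_{i+1}^n, Y_0^{i−1}, Y_{0,i+1}^n)
    let Qi : Fin n → (Fin n → X' × Y0' × (∀ k, Y' k)) →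
        (Fin n → Option X') × (Fin n → Option Y0') :=
      fun i ω => (fun j => if j ≠ i then some ((ω j).1) else none,
                  fun j => if j ≠ i then some ((ω j).2.1) else none)
    ∀ S : Finset (Fin K),
      cmi pn (fun ω => fun k : {k // k ∈ S} => J k ω)
        (fun ω => fun k : {k // k ∈ S} => fun i => (ω i).2.2 (k : Fin K))
        (fun ω => (fun i => (ω i).1, fun k : {k // k ∈ Sᶜ} => J k ω, fun i => (ω i).2.1))
      ≥ ∑ k ∈ S, ∑ i, cmi pn (U k i) (fun ω => (ω i).2.2 k)
          (fun ω => ((ω i).1, (ω i).2.1, Qi i ω)) := by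
  intro pn J U Qi S
  classical
  open S6 in
  have hpn : ∀ ω : Fin n → (X' × Y0' × (∀ k, Y' k)), 0 ≤ ∏ j, p (ω j) := fun ω =>
    Finset.prod_nonneg fun j _ => hp _
  -- rewrite each RHS term and telescope
  have hB : ∀ k : Fin K,
      (∑ i : Fin n, cmi (fun ω : Fin n → (X' × Y0' × (∀ k, Y' k)) => ∏ j, p (ω j))
        (fun ω => φ k (fun i' => (ω i').2.2 k))
        (fun ω => (ω i).2.2 k)
        (fun ω => ((fun j : Fin n => if (j : ℕ) < (i : ℕ) then some ((ω j).2.2 k) else none),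
          (fun j => (ω j).1, fun j => (ω j).2.1))))
      = cmi (fun ω : Fin n → (X' × Y0' × (∀ k, Y' k)) => ∏ j, p (ω j))
        (fun ω => φ k (fun i' => (ω i').2.2 k))
        (fun ω => fun i : Fin n => (ω i).2.2 k)
        (fun ω => (fun j => (ω j).1, fun j => (ω j).2.1)) := by
    intro k
    have h1 := S6.tele (p := p) φ hp k n (le_refl n)
    have hfil : Finset.univ.filter (fun i : Fin n => (i : ℕ) < n) = Finset.univ :=
      Finset.filter_true_of_mem fun i _ => i.isLt
    rw [hfil] at h1
    have h2 : cmi (fun ω : Fin n → (X' × Y0' × (∀ k, Y' k)) => ∏ j, p (ω j))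
        (fun ω => φ k (fun i' => (ω i').2.2 k))
        (fun ω => fun j : Fin n => if (j : ℕ) < n then some ((ω j).2.2 k) else none)
        (fun ω => (fun j => (ω j).1, fun j => (ω j).2.1))
        = cmi (fun ω : Fin n → (X' × Y0' × (∀ k, Y' k)) => ∏ j, p (ω j))
        (fun ω => φ k (fun i' => (ω i').2.2 k))
        (fun ω => fun i : Fin n => (ω i).2.2 k)
        (fun ω => (fun j => (ω j).1, fun j => (ω j).2.1)) := by
      refine S6.cmi_congr (fun _ _ => Iff.rfl) (fun ω₁ ω₂ => ?_) (fun _ _ => Iff.rfl)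
      constructor
      · intro h
        funext j
        have := congrFun h j
        rw [if_pos j.isLt, if_pos j.isLt] at this
        exact Option.some_inj.1 this
      · intro h
        funext j
        rw [if_pos j.isLt, if_pos j.isLt, congrFun h j]
    rw [← h2, h1]
  have hR : (∑ k ∈ S, ∑ i, cmi pn (U k i) (fun ω => (ω i).2.2 k)
        (fun ω => ((ω i).1, (ω i).2.1, Qi i ω)))
      = ∑ k ∈ S, cmi (fun ω : Fin n → (X' × Y0' × (∀ k, Y' k)) => ∏ j, p (ω j))
        (fun ω => φ k (fun i' => (ω i').2.2 k))
        (fun ω => fun i : Fin n => (ω i).2.2 k)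
        (fun ω => (fun j => (ω j).1, fun j => (ω j).2.1)) := by
    refine Finset.sum_congr rfl fun k _ => ?_
    have hstep : ∀ i : Fin n, cmi pn (U k i) (fun ω => (ω i).2.2 k)
        (fun ω => ((ω i).1, (ω i).2.1, Qi i ω))
        = cmi (fun ω : Fin n → (X' × Y0' × (∀ k, Y' k)) => ∏ j, p (ω j))
          (fun ω => φ k (fun i' => (ω i').2.2 k))
          (fun ω => (ω i).2.2 k)
          (fun ω => ((fun j : Fin n => if (j : ℕ) < (i : ℕ) then some ((ω j).2.2 k) else none),
            (fun j => (ω j).1, fun j => (ω j).2.1))) := fun i => S6.rhs_term (p := p) φ hp k i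
    rw [Finset.sum_congr rfl fun i _ => hstep i]
    exact hB k
  rw [ge_iff_le, hR]
  -- step 2
  have h2 := S6.step2 (p := p) φ hp hmc S
  -- add the conditioning on J_{Sᶜ}
  have hz1 : cmi (fun ω : Fin n → (X' × Y0' × (∀ k, Y' k)) => ∏ j, p (ω j))
      (fun ω => fun k : {k // k ∈ S} => fun i : Fin n => (ω i).2.2 (k : Fin K))
      (fun ω => fun k : {k // k ∈ Sᶜ} => φ (k : Fin K) (fun i => (ω i).2.2 (k : Fin K)))
      (fun ω => (fun j => (ω j).1, fun j => (ω j).2.1)) = 0 := by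
    have hib := S6.indep_blocks (n := n) hp hmc S
    have hle : cmi (fun ω : Fin n → (X' × Y0' × (∀ k, Y' k)) => ∏ j, p (ω j))
        (fun ω => fun k : {k // k ∈ S} => fun i : Fin n => (ω i).2.2 (k : Fin K))
        (fun ω => fun k : {k // k ∈ Sᶜ} => φ (k : Fin K) (fun i => (ω i).2.2 (k : Fin K)))
        (fun ω => (fun j => (ω j).1, fun j => (ω j).2.1))
        ≤ cmi (fun ω : Fin n → (X' × Y0' × (∀ k, Y' k)) => ∏ j, p (ω j))
        (fun ω => fun k : {k // k ∈ S} => fun i : Fin n => (ω i).2.2 (k : Fin K))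
        (fun ω => fun k : {k // k ∈ Sᶜ} => fun i : Fin n => (ω i).2.2 (k : Fin K))
        (fun ω => (fun j => (ω j).1, fun j => (ω j).2.1)) :=
      S6.cmi_mono hpn (fun ω₁ ω₂ h => funext fun k =>
        congrArg (φ (k : Fin K)) (congrFun h k))
    rw [hib] at hle
    exact le_antisymm hle (S6.cmi_nonneg hpn _ _ _)
  have h3 : cmi (fun ω : Fin n → (X' × Y0' × (∀ k, Y' k)) => ∏ j, p (ω j))
      (fun ω => fun k : {k // k ∈ S} => φ (k : Fin K) (fun i => (ω i).2.2 (k : Fin K)))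
      (fun ω => fun k : {k // k ∈ S} => fun i : Fin n => (ω i).2.2 (k : Fin K))
      (fun ω => (fun j => (ω j).1, fun j => (ω j).2.1))
      ≤ cmi (fun ω : Fin n → (X' × Y0' × (∀ k, Y' k)) => ∏ j, p (ω j))
      (fun ω => fun k : {k // k ∈ S} => φ (k : Fin K) (fun i => (ω i).2.2 (k : Fin K)))
      (fun ω => fun k : {k // k ∈ S} => fun i : Fin n => (ω i).2.2 (k : Fin K))
      (fun ω => ((fun k : {k // k ∈ Sᶜ} => φ (k : Fin K) (fun i => (ω i).2.2 (k : Fin K))),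
        (fun j => (ω j).1, fun j => (ω j).2.1))) := by
    have e1 := S6.cmi_symm (p := fun ω : Fin n → (X' × Y0' × (∀ k, Y' k)) => ∏ j, p (ω j))
      (fun ω => fun k : {k // k ∈ S} => φ (k : Fin K) (fun i => (ω i).2.2 (k : Fin K)))
      (fun ω => fun k : {k // k ∈ S} => fun i : Fin n => (ω i).2.2 (k : Fin K))
      (fun ω => (fun j => (ω j).1, fun j => (ω j).2.1))
    have e2 := S6.cmi_symm (p := fun ω : Fin n → (X' × Y0' × (∀ k, Y' k)) => ∏ j, p (ω j))
      (fun ω => fun k : {k // k ∈ S} => φ (k : Fin K) (fun i => (ω i).2.2 (k : Fin K)))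
      (fun ω => fun k : {k // k ∈ S} => fun i : Fin n => (ω i).2.2 (k : Fin K))
      (fun ω => ((fun k : {k // k ∈ Sᶜ} => φ (k : Fin K) (fun i => (ω i).2.2 (k : Fin K))),
        (fun j => (ω j).1, fun j => (ω j).2.1)))
    rw [e1, e2]
    exact S6.cmi_cond_ge hpn hz1
  have h4 : cmi (fun ω : Fin n → (X' × Y0' × (∀ k, Y' k)) => ∏ j, p (ω j))
      (fun ω => fun k : {k // k ∈ S} => φ (k : Fin K) (fun i => (ω i).2.2 (k : Fin K)))
      (fun ω => fun k : {k // k ∈ S} => fun i : Fin n => (ω i).2.2 (k : Fin K))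
      (fun ω => ((fun k : {k // k ∈ Sᶜ} => φ (k : Fin K) (fun i => (ω i).2.2 (k : Fin K))),
        (fun j => (ω j).1, fun j => (ω j).2.1)))
      = cmi pn (fun ω => fun k : {k // k ∈ S} => J k ω)
        (fun ω => fun k : {k // k ∈ S} => fun i => (ω i).2.2 (k : Fin K))
        (fun ω => (fun i => (ω i).1, fun k : {k // k ∈ Sᶜ} => J k ω,
          fun i => (ω i).2.1)) := by
    refine S6.cmi_congr (fun _ _ => Iff.rfl) (fun _ _ => Iff.rfl) (fun ω₁ ω₂ => ?_)
    constructor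
    · intro h
      simp only [Prod.mk.injEq] at h ⊢
      exact ⟨h.2.1, h.1, h.2.2⟩
    · intro h
      simp only [Prod.mk.injEq] at h ⊢
      exact ⟨h.2.1, h.1, h.2.2⟩
  calc ∑ k ∈ S, cmi (fun ω : Fin n → (X' × Y0' × (∀ k, Y' k)) => ∏ j, p (ω j))
        (fun ω => φ k (fun i' => (ω i').2.2 k))
        (fun ω => fun i : Fin n => (ω i).2.2 k)
        (fun ω => (fun j => (ω j).1, fun j => (ω j).2.1))
      ≤ cmi (fun ω : Fin n → (X' × Y0' × (∀ k, Y' k)) => ∏ j, p (ω j))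
        (fun ω => fun k : {k // k ∈ S} => φ (k : Fin K) (fun i => (ω i).2.2 (k : Fin K)))
        (fun ω => fun k : {k // k ∈ S} => fun i : Fin n => (ω i).2.2 (k : Fin K))
        (fun ω => (fun j => (ω j).1, fun j => (ω j).2.1)) := h2
    _ ≤ _ := h3.trans (le_of_eq h4)
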